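/- For every ε > 0 there exists a constant C = C(ε) such that the following holds for every n, every 3-uniform hypergraph H on n vertices, and every matching M of maximum size in H: the number of vertices v ∈ V(H) \ V(M) for which there are at least εn² pairs {E,F} of distinct edges of M such that L_v(EF) contains a perfect matching is at most C. -/

import Mathlib

/-!
Fix two edges `E ≠ F` of the maximum matching `M`. If thirteen uncovered vertices `v` each had
a bijection `E → F` spanning a perfect matching of `L_v(EF)`, then, as there are only `3! = 6`
such bijections, three of them, `v₁, v₂, v₃`, would share one, `f`. Writing `E = {x₁, x₂, x₃}`,
the triples `{vᵢ, xᵢ, f xᵢ}` are disjoint edges, and trading `E, F` for them enlarges `M`.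
So every pair `{E, F}` is counted by at most `24` uncovered vertices, and double counting gives
`|B| εn² ≤ 24 (|M| choose 2) ≤ 4n²/3` for the set `B` of vertices in question, as `3|M| ≤ n`.
-/

open Finset

namespace Hypergraph

variable {V : Type*} [DecidableEq V] {H M : Finset (Finset V)}

structure IsMaximumMatching (H M : Finset (Finset V)) : Prop where
  subset : M ⊆ H
  pairwiseDisjoint : (M : Set (Finset V)).PairwiseDisjoint id
  card_le : ∀ M' ⊆ H, (M' : Set (Finset V)).PairwiseDisjoint id → #M' ≤ #M

/-- The restriction of `f` to `E` is a perfect matching of the link graph `L_v(E, F)`. -/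
def LinkHasPerfectMatching (H : Finset (Finset V)) (v : V) (E F : Finset V) : Prop :=
  ∃ f : V → V, Set.BijOn f E F ∧ ∀ a ∈ E, ({v, a, f a} : Finset V) ∈ H

open Classical in
noncomputable def linkedPairs (H M : Finset (Finset V)) (v : V) : Finset (Finset (Finset V)) :=
  {S ∈ M.powersetCard 2 | ∃ E ∈ S, ∃ F ∈ S, E ≠ F ∧ LinkHasPerfectMatching H v E F}

theorem mem_linkedPairs {v : V} {S : Finset (Finset V)} :
    S ∈ linkedPairs H M v ↔
      S ⊆ M ∧ #S = 2 ∧ ∃ E ∈ S, ∃ F ∈ S, E ≠ F ∧ LinkHasPerfectMatching H v E F := by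
  simp only [linkedPairs, mem_filter, mem_powersetCard, and_assoc]

theorem ncard_setOf_eq_card_linkedPairs (v : V) :
    {S : Finset (Finset V) | S ⊆ M ∧ S.card = 2 ∧
      ∃ E ∈ S, ∃ F ∈ S, E ≠ F ∧
        ∃ f : V → V, Set.BijOn f E F ∧ ∀ a ∈ E, ({v, a, f a} : Finset V) ∈ H}.ncard =
      #(linkedPairs H M v) := by
  rw [← Set.ncard_coe_finset]
  congr 1
  ext S
  exact mem_linkedPairs.symm

theorem IsMaximumMatching.card_le_card_of_disjoint_biUnion_sdiff (hM : IsMaximumMatching H M)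
    {R N : Finset (Finset V)} (hRM : R ⊆ M) (hNH : N ⊆ H)
    (hN : (N : Set (Finset V)).PairwiseDisjoint id) (hN₀ : ∅ ∉ N)
    (hNR : Disjoint (N.biUnion id) ((M \ R).biUnion id)) : #N ≤ #R := by
  have hdisj : Disjoint N (M \ R) := by
    refine disjoint_left.mpr fun e heN heM => hN₀ ?_
    have hee : Disjoint e e :=
      hNR.mono (subset_biUnion_of_mem id heN) (subset_biUnion_of_mem id heM)
    rwa [disjoint_self.mp hee] at heN
  have hmatching : ((N ∪ M \ R : Finset (Finset V)) : Set (Finset V)).PairwiseDisjoint id := by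
    rw [coe_union, Set.pairwiseDisjoint_union]
    refine ⟨hN, hM.pairwiseDisjoint.subset (by simp), fun A hA B hB _ => ?_⟩
    exact hNR.mono (subset_biUnion_of_mem id hA) (subset_biUnion_of_mem id hB)
  have hle := hM.card_le _ (union_subset hNH (sdiff_subset.trans hM.subset)) hmatching
  rw [card_union_of_disjoint hdisj, card_sdiff_of_subset hRM] at hle
  have := card_le_card hRM
  omega

theorem IsMaximumMatching.card_le_two_of_link_triples (hM : IsMaximumMatching H M)
    {E F : Finset V} (hE : E ∈ M) (hF : F ∈ M) (hEF : E ≠ F)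
    {ι : Type*} [Fintype ι] {w x y : ι → V}
    (hw : Function.Injective w) (hx : Function.Injective x) (hy : Function.Injective y)
    (hwM : ∀ i, w i ∉ M.biUnion id) (hxE : ∀ i, x i ∈ E) (hyF : ∀ i, y i ∈ F)
    (hwxy : ∀ i, ({w i, x i, y i} : Finset V) ∈ H) : Fintype.card ι ≤ 2 := by
  set t : ι → Finset V := fun i => {w i, x i, y i}
  have hwG : ∀ i, ∀ G ∈ M, w i ∉ G := fun i G hG hwi => hwM i (mem_biUnion.mpr ⟨G, hG, hwi⟩)
  have hEF' : Disjoint E F := hM.pairwiseDisjoint hE hF hEF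
  have ht_ne : ∀ i, t i ≠ ∅ := fun i => ne_empty_of_mem (mem_insert_self (w i) _)
  have ht : Pairwise fun i j => Disjoint (t i) (t j) := by
    intro i j hij
    have := hwG i E hE; have := hwG i F hF; have := hwG j E hE; have := hwG j F hF
    have := hxE i; have := hxE j; have := hyF i; have := hyF j
    have := hw.ne hij; have := hx.ne hij; have := hy.ne hij
    simp only [t, disjoint_insert_left, disjoint_insert_right, disjoint_singleton,
      mem_insert, mem_singleton]
    grind [disjoint_left]
  have ht_inj : Function.Injective t := fun i j hij => by
    by_contra hne
    have hii : Disjoint (t i) (t j) := ht hne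
    rw [← hij, disjoint_self] at hii
    exact ht_ne i hii
  have hcard := hM.card_le_card_of_disjoint_biUnion_sdiff (R := {E, F}) (N := univ.image t)
    (insert_subset hE (singleton_subset_iff.mpr hF)) (image_subset_iff.mpr fun i _ => hwxy i)
    ?_ ?_ ?_
  · rwa [card_image_of_injective _ ht_inj, card_pair hEF, card_univ] at hcard
  · rw [coe_image, coe_univ, Set.image_univ]
    rintro _ ⟨i, rfl⟩ _ ⟨j, rfl⟩ hne
    exact ht (ne_of_apply_ne t hne)
  · simpa [eq_comm] using ht_ne
  · simp only [disjoint_biUnion_left, disjoint_biUnion_right, mem_image, mem_univ, true_and,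
      mem_sdiff, mem_insert, mem_singleton, not_or, id]
    rintro G ⟨hG, hGE, hGF⟩ _ ⟨i, rfl⟩
    have := hM.pairwiseDisjoint hE hG (Ne.symm hGE)
    have := hM.pairwiseDisjoint hF hG (Ne.symm hGF)
    have := hwG i G hG; have := hxE i; have := hyF i
    simp only [t, disjoint_insert_left, disjoint_singleton_left]
    grind [disjoint_left]

theorem IsMaximumMatching.card_le_of_linkHasPerfectMatching (hM : IsMaximumMatching H M)
    {E F : Finset V} (hE : E ∈ M) (hF : F ∈ M) (hEF : E ≠ F) (hE₃ : #E = 3)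
    {s : Finset V} (hs : ∀ v ∈ s, v ∉ M.biUnion id ∧ LinkHasPerfectMatching H v E F) :
    #s ≤ 12 := by
  by_contra! hs₁₂
  choose f hf using fun v : s => (hs v v.2).2
  let σ : s → (E ≃ F) := fun v => (hf v).1.equiv
  obtain ⟨v₀, hv₀⟩ := card_pos.mp (by omega : 0 < #s)
  obtain ⟨τ, hτ⟩ := Fintype.exists_lt_card_fiber_of_mul_lt_card σ (n := 2) (by
    rw [Fintype.card_equiv (σ ⟨v₀, hv₀⟩)]
    simp only [Fintype.card_coe, hE₃, Nat.factorial]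
    omega)
  obtain ⟨ι⟩ : Nonempty (E ↪ ({v | σ v = τ} : Finset s)) :=
    Function.Embedding.nonempty_of_card_le (by rw [Fintype.card_coe, Fintype.card_coe, hE₃]; omega)
  have hlink (a : E) : ({((ι a : s) : V), (a : V), (τ a : V)} : Finset V) ∈ H := by
    have hστ : σ (ι a) = τ := (mem_filter.mp (ι a).2).2
    have hfa : f (ι a : s) a = τ a := congrArg Subtype.val (DFunLike.congr_fun hστ a)
    exact hfa ▸ (hf (ι a : s)).2 a a.2
  have := hM.card_le_two_of_link_triples hE hF hEF
    (Subtype.val_injective.comp (Subtype.val_injective.comp ι.injective))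
    Subtype.val_injective (Subtype.val_injective.comp τ.injective)
    (fun a => (hs _ (ι a : s).2).1) (fun a => a.2) (fun a => (τ a).2) hlink
  simp [hE₃] at this

theorem IsMaximumMatching.card_filter_mem_linkedPairs_le (hM : IsMaximumMatching H M)
    (hM₃ : ∀ e ∈ M, #e = 3) {s : Finset V} (hs : ∀ v ∈ s, v ∉ M.biUnion id)
    {S : Finset (Finset V)} (hS : S ∈ M.powersetCard 2) :
    #{v ∈ s | S ∈ linkedPairs H M v} ≤ 24 := by
  classical
  obtain ⟨hSM, hS₂⟩ := mem_powersetCard.mp hS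
  obtain ⟨E, F, hEF, rfl⟩ := card_eq_two.mp hS₂
  have hE : E ∈ M := hSM (mem_insert_self E {F})
  have hF : F ∈ M := hSM (mem_insert_of_mem (mem_singleton_self F))
  have hlink {E F} (hE : E ∈ M) (hF : F ∈ M) (hEF : E ≠ F) :
      #{v ∈ s | LinkHasPerfectMatching H v E F} ≤ 12 :=
    hM.card_le_of_linkHasPerfectMatching hE hF hEF (hM₃ E hE)
      fun v hv => ⟨hs v (mem_filter.mp hv).1, (mem_filter.mp hv).2⟩
  calc #{v ∈ s | {E, F} ∈ linkedPairs H M v}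
      ≤ #({v ∈ s | LinkHasPerfectMatching H v E F} ∪
          {v ∈ s | LinkHasPerfectMatching H v F E}) := by
        refine card_le_card fun v hv => ?_
        obtain ⟨hvs, hv⟩ := mem_filter.mp hv
        obtain ⟨-, -, E', hE', F', hF', hne, hvEF⟩ := mem_linkedPairs.mp hv
        simp only [mem_insert, mem_singleton] at hE' hF'
        rcases hE' with rfl | rfl <;> rcases hF' with rfl | rfl <;>
          simp_all [mem_union, mem_filter]
    _ ≤ 12 + 12 := (card_union_le _ _).trans (add_le_add (hlink hE hF hEF) (hlink hF hE hEF.symm))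

theorem three_mul_card_le_card [Fintype V] (hM₃ : ∀ e ∈ M, #e = 3)
    (hM : (M : Set (Finset V)).PairwiseDisjoint id) : 3 * #M ≤ Fintype.card V := by
  calc 3 * #M = ∑ e ∈ M, #e := by rw [sum_const_nat hM₃, mul_comm]
    _ = #(M.biUnion id) := (card_biUnion hM).symm
    _ ≤ Fintype.card V := card_le_univ _

theorem IsMaximumMatching.card_le_of_le_card_linkedPairs [Fintype V] (hM : IsMaximumMatching H M)
    (hM₃ : ∀ e ∈ M, #e = 3) {ε : ℝ} (hε : 0 < ε) :
    (#{v | v ∉ M.biUnion id ∧ ε * Fintype.card V ^ 2 ≤ #(linkedPairs H M v)} : ℝ) ≤ 2 / ε := by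
  classical
  set n := Fintype.card V
  set B : Finset V := {v | v ∉ M.biUnion id ∧ ε * n ^ 2 ≤ #(linkedPairs H M v)}
  have hcount : #B * (ε * n ^ 2) ≤ #(M.powersetCard 2) * 24 := by
    simp only [← nsmul_eq_mul]
    refine card_nsmul_le_card_nsmul (fun v S => S ∈ linkedPairs H M v) (fun v hv => ?_)
      fun S hS => mod_cast hM.card_filter_mem_linkedPairs_le hM₃
        (fun v hv => (mem_filter.mp hv).2.1) hS
    refine (mem_filter.mp hv).2.2.trans (mod_cast card_le_card fun S hS => ?_)
    exact mem_filter.mpr ⟨(mem_filter.mp hS).1, hS⟩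
  have hpairs : (#(M.powersetCard 2) : ℝ) * 18 ≤ n ^ 2 := by
    have h3M : (3 * #M : ℝ) ≤ n := mod_cast three_mul_card_le_card hM₃ hM.pairwiseDisjoint
    have hchoose : ((#M).choose 2 : ℝ) ≤ #M ^ 2 / 2 := by
      simpa using Nat.choose_le_pow_div (α := ℝ) 2 #M
    rw [card_powersetCard]
    nlinarith
  rcases Nat.eq_zero_or_pos n with hn | hn
  · have hB : #B = 0 := Nat.le_zero.mp (hn ▸ card_le_univ B)
    rw [hB, Nat.cast_zero]
    positivity
  have : (0 : ℝ) < n ^ 2 := by positivity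
  rw [le_div_iff₀ hε]
  nlinarith

end Hypergraph

open Hypergraph in
theorem stmt_12 (ε : ℝ) (hε : 0 < ε) :
    ∃ C : ℕ, ∀ (Vt : Type) [Fintype Vt] [DecidableEq Vt] (H : Finset (Finset Vt)),
      (∀ e ∈ H, e.card = 3) →
      ∀ M ⊆ H, (M : Set (Finset Vt)).PairwiseDisjoint id →
      (∀ M' ⊆ H, (M' : Set (Finset Vt)).PairwiseDisjoint id → M'.card ≤ M.card) →
      {v : Vt | v ∉ M.biUnion id ∧
        ε * (Fintype.card Vt : ℝ)^2 ≤
          (({S : Finset (Finset Vt) | S ⊆ M ∧ S.card = 2 ∧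
            ∃ E ∈ S, ∃ F ∈ S, E ≠ F ∧
              ∃ f : Vt → Vt, Set.BijOn f ↑E ↑F ∧
                ∀ a ∈ E, ({v, a, f a} : Finset Vt) ∈ H}.ncard : ℝ))}.ncard ≤ C := by
  refine ⟨⌈2 / ε⌉₊, fun V _ _ H hH M hMH hM hmax => ?_⟩
  have hmaximum : IsMaximumMatching H M := ⟨hMH, hM, hmax⟩
  simp_rw [ncard_setOf_eq_card_linkedPairs]
  rw [Set.ncard_eq_toFinset_card', Set.toFinset_ofPred, ← Nat.cast_le (α := ℝ)]
  exact (hmaximum.card_le_of_le_card_linkedPairs (fun e he => hH e (hMH he)) hε).trans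
    (Nat.le_ceil _)
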